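/- Let V be an (n+1)-dimensional vector space over F_q, q odd, n+1 ≥ 5, with a nondegenerate symmetric bilinear form of plus type. If p and p' are any two nondegenerate 1-dimensional subspaces, then there exists an elliptic 2-dimensional subspace l containing p' such that ⟨p⟩ + l is a nondegenerate 3-dimensional subspace, and some elliptic 2-dimensional subspace through p meets l in a nondegenerate 1-dimensional subspace. In particular, the graph on nondegenerate 1-dimensional subspaces with adjacency 'lying together on an elliptic 2-dimensional subspace' has diameter at most two. -/

import Mathlib

/-!
Let `p, p'` be anisotropic with `⟨p⟩ ≠ ⟨p'⟩`, `c' = B(p', p')` and `ν` a nonsquare. The vector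
`z₀ = c' p - B(p', p) p'` is the (scaled) projection of `p` to `p'^⊥`, which is nondegenerate of
dimension at least three; there we find `z` with `B(z, z) = -c' ν` such that `⟨z₀, z⟩` is a
nondegenerate plane (take `z ⊥ z₀` if `z₀` is anisotropic, and `B(z₀, z) = 1` otherwise). Then
`l = ⟨p', z⟩` is elliptic, since `-B(p', p') B(z, z) = c'² ν` is a nonsquare, and
`⟨p⟩ + l = ⟨p'⟩ ⊥ ⟨z₀, z⟩` is a nondegenerate 3-space `T`. In `T` a vector `z' ⊥ p` with
`B(z', z') = -B(p, p) ν` gives the elliptic line `l' = ⟨p, z'⟩`, which meets `l` in a point; this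
point is nondegenerate because `l` is anisotropic, and both `⟨p⟩` and `⟨p'⟩` lie on an elliptic
line with it.
-/

open Module

/-- A nondegenerate symmetric bilinear form on a `d`-dimensional space over a finite
field of odd order is of *plus type*: for even `d` this means `(-1)^(d/2)` times the
discriminant (Gram determinant, well defined modulo squares) is a square; for odd `d`
the convention is that the form is of plus type iff `(-1)^⌊d/2⌋` times the
discriminant is a square exactly when `-1` is a square. -/
def BIsPlusType {F M : Type*} [Field F] [AddCommGroup M] [Module F M]
    (B : LinearMap.BilinForm F M) : Prop :=
  ∃ (d : ℕ) (b : Basis (Fin d) F M),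
    if Even d then IsSquare ((-1 : F) ^ (d / 2) * (Matrix.of fun i j => B (b i) (b j)).det)
    else (IsSquare ((-1 : F) ^ (d / 2) * (Matrix.of fun i j => B (b i) (b j)).det) ↔
      IsSquare (-1 : F))

/-- A subspace `W` is an *elliptic line* for `B` if it is 2-dimensional,
nondegenerate and anisotropic. -/
def IsEllipticLine {F V : Type*} [Field F] [AddCommGroup V] [Module F V]
    (B : LinearMap.BilinForm F V) (W : Submodule F V) : Prop :=
  finrank F W = 2 ∧ (B.restrict W).Nondegenerate ∧ ∀ v ∈ W, B v v = 0 → v = 0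

/-- The graph whose vertices are the nondegenerate points and whose edges are the
pairs of points lying together on an elliptic line. -/
def ellipticCollinearityGraph {F V : Type*} [Field F] [AddCommGroup V] [Module F V]
    (B : LinearMap.BilinForm F V) :
    SimpleGraph {P : Submodule F V // finrank F P = 1 ∧ (B.restrict P).Nondegenerate} where
  Adj P Q := P ≠ Q ∧ IsEllipticLine B (P.1 ⊔ Q.1)
  symm := by
    constructor
    rintro P Q ⟨hne, he⟩
    exact ⟨hne.symm, by rwa [sup_comm]⟩
  loopless := by constructor; rintro P ⟨hne, -⟩; exact hne rfl

open Submodule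

theorem eq_zero_of_mul_sq_add_mul_sq_eq_zero {K : Type*} [Field K] {a b x y : K}
    (h : ¬IsSquare (-(a * b))) (hxy : a * x ^ 2 + b * y ^ 2 = 0) : x = 0 ∧ y = 0 := by
  have hy : y = 0 := by
    by_contra hy
    exact h ⟨a * x / y, by field_simp; linear_combination (-a) * hxy⟩
  have ha : a ≠ 0 := by rintro rfl; exact h ⟨0, by ring⟩
  subst hy
  exact ⟨pow_eq_zero_iff two_ne_zero |>.1 <| (mul_eq_zero.1 (by simpa using hxy)).resolve_left ha,
    rfl⟩

theorem not_isSquare_sq_mul {K : Type*} [Field K] {a ν : K} (hν : ¬IsSquare ν) (ha : a ≠ 0) :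
    ¬IsSquare (a ^ 2 * ν) := by
  rintro ⟨s, hs⟩
  exact hν ⟨s / a, by field_simp; linear_combination hs⟩

theorem FiniteField.exists_mul_sq_add_mul_sq_eq {F : Type*} [Field F] [Fintype F]
    (hF : ringChar F ≠ 2) {a b : F} (ha : a ≠ 0) (hb : b ≠ 0) (m : F) :
    ∃ x y : F, a * x ^ 2 + b * y ^ 2 = m := by
  open Polynomial in
  obtain ⟨x, y, hxy⟩ := FiniteField.exists_root_sum_quadratic
    (f := C a * X ^ 2 + C 0 * X + C (-m)) (g := C b * X ^ 2 + C 0 * X + C 0)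
    (degree_quadratic ha) (degree_quadratic hb) (FiniteField.odd_card_of_char_ne_two hF)
  simp only [eval_add, eval_mul, eval_pow, eval_C, eval_X] at hxy
  exact ⟨x, y, by linear_combination hxy⟩

namespace LinearMap.BilinForm

variable {K V : Type*} [Field K] [AddCommGroup V] [Module K V] {B : LinearMap.BilinForm K V}

theorem nondegenerate_restrict_iff (hB : B.IsRefl) {W : Submodule K V} :
    (B.restrict W).Nondegenerate ↔ ∀ x ∈ W, (∀ y ∈ W, B y x = 0) → x = 0 := by
  refine ⟨fun h x hx hxW => congrArg Subtype.val (h.2 ⟨x, hx⟩ fun y => hxW y y.2), fun h => ?_⟩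
  exact B.nondegenerate_restrict_of_disjoint_orthogonal hB <|
    Submodule.disjoint_def.2 fun x hx hxo => h x hx fun y hy => hxo y hy

theorem nondegenerate_restrict_span_singleton (hB : B.IsRefl) {x : V} (hx : B x x ≠ 0) :
    (B.restrict (K ∙ x)).Nondegenerate :=
  B.nondegenerate_restrict_of_disjoint_orthogonal hB (isCompl_span_singleton_orthogonal hx).disjoint

theorem nondegenerate_restrict_of_anisotropic (hB : B.IsRefl) {W : Submodule K V}
    (h : ∀ x ∈ W, B x x = 0 → x = 0) : (B.restrict W).Nondegenerate :=
  (nondegenerate_restrict_iff hB).2 fun x hx hxW => h x hx (hxW x hx)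

theorem disjoint_of_le_orthogonal (hB : B.IsRefl) {U W : Submodule K V}
    (hU : (B.restrict U).Nondegenerate) (hUW : W ≤ B.orthogonal U) : Disjoint U W :=
  Submodule.disjoint_def.2 fun x hxU hxW => (nondegenerate_restrict_iff hB).1 hU x hxU (hUW hxW)

theorem nondegenerate_restrict_sup (hB : B.IsRefl) {U W : Submodule K V}
    (hU : (B.restrict U).Nondegenerate) (hW : (B.restrict W).Nondegenerate)
    (hUW : W ≤ B.orthogonal U) : (B.restrict (U ⊔ W)).Nondegenerate := by
  rw [nondegenerate_restrict_iff hB] at hU hW ⊢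
  intro x hx hxo
  obtain ⟨u, hu, w, hw, rfl⟩ := Submodule.mem_sup.1 hx
  have hu0 : u = 0 := hU u hu fun y hy => by
    simpa [show B y w = 0 from hUW hw y hy] using hxo y (mem_sup_left hy)
  have hw0 : w = 0 := hW w hw fun y hy => by
    simpa [show B y u = 0 from hB _ _ (hUW hy u hu)] using hxo y (mem_sup_right hy)
  rw [hu0, hw0, add_zero]

theorem finrank_sup_eq_of_le_orthogonal (hB : B.IsRefl) {U W : Submodule K V}
    [FiniteDimensional K U] [FiniteDimensional K W] (hU : (B.restrict U).Nondegenerate)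
    (hUW : W ≤ B.orthogonal U) : finrank K (U ⊔ W : Submodule K V) = finrank K U + finrank K W := by
  have := finrank_sup_add_finrank_inf_eq U W
  rwa [(disjoint_of_le_orthogonal hB hU hUW).eq_bot, finrank_bot, add_zero] at this

theorem apply_smul_add_smul_self (hB : B.IsSymm) {u v : V} (huv : B u v = 0) (a b : K) :
    B (a • u + b • v) (a • u + b • v) = B u u * a ^ 2 + B v v * b ^ 2 := by
  have hvu : B v u = 0 := by rw [← hB.eq, huv]
  simp only [map_add, map_smul, LinearMap.add_apply, LinearMap.smul_apply, smul_eq_mul, huv, hvu]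
  ring

theorem eq_zero_of_gram_det_ne_zero (hB : B.IsSymm) {u v : V}
    (h : B u u * B v v - B u v ^ 2 ≠ 0) {a b : K} (hu : B u (a • u + b • v) = 0)
    (hv : B v (a • u + b • v) = 0) : a = 0 ∧ b = 0 := by
  have hvu : B v u = B u v := hB.eq v u
  simp only [map_add, map_smul, smul_eq_mul, hvu] at hu hv
  exact ⟨(mul_eq_zero.1 (by linear_combination B v v * hu - B u v * hv)).resolve_right h,
    (mul_eq_zero.1 (by linear_combination B u u * hv - B u v * hu)).resolve_right h⟩

theorem finrank_span_pair_of_gram_det_ne_zero (hB : B.IsSymm) {u v : V}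
    (h : B u u * B v v - B u v ^ 2 ≠ 0) : finrank K (span K {u, v}) = 2 := by
  have hli : LinearIndependent K ![u, v] := LinearIndependent.pair_iff.2 fun a b hab =>
    eq_zero_of_gram_det_ne_zero hB h (by simp [hab]) (by simp [hab])
  rw [show ({u, v} : Set V) = Set.range ![u, v] by simp [Set.pair_comm], finrank_span_eq_card hli,
    Fintype.card_fin]

theorem nondegenerate_restrict_span_pair_of_gram_det_ne_zero (hB : B.IsSymm) {u v : V}
    (h : B u u * B v v - B u v ^ 2 ≠ 0) :
    (B.restrict (span K {u, v})).Nondegenerate := by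
  refine (nondegenerate_restrict_iff hB.isRefl).2 fun x hx hxo => ?_
  obtain ⟨a, b, rfl⟩ := mem_span_pair.1 hx
  obtain ⟨rfl, rfl⟩ := eq_zero_of_gram_det_ne_zero hB h (hxo u (subset_span (by simp)))
    (hxo v (subset_span (by simp)))
  simp

theorem exists_apply_eq_one_apply_self_eq (h2 : (2 : K) ≠ 0) (hB : B.IsSymm)
    (hnd : B.Nondegenerate) {x : V} (hx : x ≠ 0) (hxx : B x x = 0) (m : K) :
    ∃ z, B x z = 1 ∧ B z z = m := by
  obtain ⟨w, hw⟩ : ∃ w, B x w ≠ 0 := by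
    by_contra! h
    exact hx (hnd.1 x h)
  set w₁ := (B x w)⁻¹ • w
  have hw₁ : B x w₁ = 1 := by simp [w₁, hw]
  refine ⟨w₁ + ((m - B w₁ w₁) / 2) • x, by simp [hw₁, hxx], ?_⟩
  simp only [map_add, map_smul, LinearMap.add_apply, LinearMap.smul_apply, smul_eq_mul, hw₁, hxx,
    hB.eq w₁ x]
  field_simp
  ring

variable [Fintype K]

theorem exists_apply_self_eq (hK : ringChar K ≠ 2) [FiniteDimensional K V] (hB : B.IsSymm)
    (hnd : B.Nondegenerate) (h2 : 2 ≤ finrank K V) (m : K) : ∃ x, B x x = m := by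
  have : Invertible (2 : K) := invertibleOfNonzero (Ring.two_ne_zero hK)
  obtain ⟨b, hb⟩ := exists_orthogonal_basis (isSymm_iff.1 hB)
  let i : Fin (finrank K V) := ⟨0, by omega⟩
  let j : Fin (finrank K V) := ⟨1, by omega⟩
  obtain ⟨x, y, hxy⟩ := FiniteField.exists_mul_sq_add_mul_sq_eq hK
    (iIsOrtho.not_isOrtho_basis_self_of_nondegenerate hb hnd i)
    (iIsOrtho.not_isOrtho_basis_self_of_nondegenerate hb hnd j) m
  exact ⟨x • b i + y • b j,
    (apply_smul_add_smul_self hB (hb (by simp [i, j, Fin.ext_iff])) x y).trans hxy⟩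

theorem exists_isOrtho_apply_self_eq (hK : ringChar K ≠ 2) [FiniteDimensional K V]
    (hB : B.IsSymm) (hnd : B.Nondegenerate) (h3 : 3 ≤ finrank K V) {x : V} (hx : B x x ≠ 0)
    (m : K) : ∃ z, B x z = 0 ∧ B z z = m := by
  have hW : finrank K (B.orthogonal (K ∙ x)) = finrank K V - 1 := by
    rw [finrank_orthogonal hnd, finrank_span_singleton (ne_zero_of_not_isOrtho_self x hx)]
  obtain ⟨z, hz⟩ := exists_apply_self_eq hK (hB.restrict _)
    (B.restrict_nondegenerate_orthogonal_spanSingleton hnd hB.isRefl hx) (by omega) m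
  exact ⟨z, z.2 x (mem_span_singleton_self x), hz⟩

theorem exists_apply_self_eq_gram_det_ne_zero (hK : ringChar K ≠ 2) [FiniteDimensional K V]
    (hB : B.IsSymm) (hnd : B.Nondegenerate) (h3 : 3 ≤ finrank K V) {x : V} (hx : x ≠ 0) {m : K}
    (hm : m ≠ 0) : ∃ z, B z z = m ∧ B x x * B z z - B x z ^ 2 ≠ 0 := by
  by_cases hxx : B x x = 0
  · obtain ⟨z, hxz, hzz⟩ :=
      exists_apply_eq_one_apply_self_eq (Ring.two_ne_zero hK) hB hnd hx hxx m
    exact ⟨z, hzz, by simp [hxx, hxz]⟩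
  · obtain ⟨z, hxz, hzz⟩ := exists_isOrtho_apply_self_eq hK hB hnd h3 hxx m
    exact ⟨z, hzz, by simp [hxz, hzz, hxx, hm]⟩

end LinearMap.BilinForm

theorem Submodule.span_singleton_sup_span_pair_eq {K V : Type*} [Field K] [AddCommGroup V]
    [Module K V] {x y z : V} {a : K} (ha : a ≠ 0) (b : K) :
    K ∙ x ⊔ span K {y, z} = K ∙ y ⊔ span K {a • x - b • y, z} := by
  rw [← span_insert, ← span_insert]
  apply le_antisymm <;> refine span_le.2 (Set.insert_subset_iff.2
    ⟨?_, Set.insert_subset_iff.2 ⟨?_, Set.singleton_subset_iff.2 (subset_span (by simp))⟩⟩)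
  · have hx : x = a⁻¹ • (a • x - b • y) + (a⁻¹ * b) • y := by
      simp [smul_sub, smul_smul, ha]
    nth_rewrite 2 [hx]
    exact add_mem (smul_mem _ _ (subset_span (by simp))) (smul_mem _ _ (subset_span (by simp)))
  · exact subset_span (by simp)
  · exact subset_span (by simp)
  · exact sub_mem (smul_mem _ _ (subset_span (by simp))) (smul_mem _ _ (subset_span (by simp)))

section EllipticLine

open LinearMap.BilinForm

variable {K V : Type*} [Field K] [AddCommGroup V] [Module K V] {B : LinearMap.BilinForm K V}

theorem isEllipticLine_span_pair (hB : B.IsSymm) {u v : V} (huv : B u v = 0)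
    (h : ¬IsSquare (-(B u u * B v v))) : IsEllipticLine B (span K {u, v}) := by
  have hdet : B u u * B v v - B u v ^ 2 ≠ 0 := by
    rw [huv]
    rintro h0
    exact h ⟨0, by linear_combination -h0⟩
  refine ⟨finrank_span_pair_of_gram_det_ne_zero hB hdet,
    nondegenerate_restrict_span_pair_of_gram_det_ne_zero hB hdet, fun x hx hxx => ?_⟩
  obtain ⟨a, b, rfl⟩ := mem_span_pair.1 hx
  rw [apply_smul_add_smul_self hB huv] at hxx
  obtain ⟨rfl, rfl⟩ := eq_zero_of_mul_sq_add_mul_sq_eq_zero h hxx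
  simp

variable [Fintype K]

theorem exists_isEllipticLine_inf_nondegenerate (hK : ringChar K ≠ 2) (hB : B.IsSymm) {p : V}
    (hp : B p p ≠ 0) {l : Submodule K V} (hl : IsEllipticLine B l)
    (hT : finrank K (K ∙ p ⊔ l : Submodule K V) = 3)
    (hTnd : (B.restrict (K ∙ p ⊔ l)).Nondegenerate) :
    ∃ l' : Submodule K V, IsEllipticLine B l' ∧ p ∈ l' ∧ finrank K (l' ⊓ l : Submodule K V) = 1 ∧
      (B.restrict (l' ⊓ l)).Nondegenerate := by
  set T := K ∙ p ⊔ l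
  have : FiniteDimensional K T := Module.finite_of_finrank_pos (by omega)
  have : FiniteDimensional K l := Module.finite_of_finrank_pos (by rw [hl.1]; omega)
  have hpT : p ∈ T := mem_sup_left (mem_span_singleton_self p)
  obtain ⟨ν, hν⟩ := FiniteField.exists_nonsquare hK
  obtain ⟨⟨z, hzT⟩, hpz, hzz⟩ := exists_isOrtho_apply_self_eq hK (hB.restrict T) hTnd hT.ge
    (x := ⟨p, hpT⟩) hp (-(B p p * ν))
  change B p z = 0 at hpz
  change B z z = _ at hzz
  have hl' : IsEllipticLine B (span K {p, z}) := isEllipticLine_span_pair hB hpz <| by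
    rw [hzz, show -(B p p * -(B p p * ν)) = B p p ^ 2 * ν by ring]
    exact not_isSquare_sq_mul hν hp
  have : FiniteDimensional K (span K {p, z}) := Module.finite_of_finrank_pos (by rw [hl'.1]; omega)
  have hsup : span K {p, z} ⊔ l = T :=
    le_antisymm (sup_le (span_le.2 (Set.insert_subset hpT (Set.singleton_subset_iff.2 hzT)))
      le_sup_right) (sup_le_sup_right (span_mono (by simp)) l)
  refine ⟨_, hl', subset_span (by simp), ?_,
    nondegenerate_restrict_of_anisotropic hB.isRefl fun x hx => hl.2.2 x hx.2⟩
  have := finrank_sup_add_finrank_inf_eq (span K {p, z}) l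
  rw [hsup, hT, hl.1, hl'.1] at this
  omega

theorem exists_isEllipticLine_span_singleton_sup_nondegenerate (hK : ringChar K ≠ 2)
    [FiniteDimensional K V] (hB : B.IsSymm) (hnd : B.Nondegenerate) (h4 : 4 ≤ finrank K V)
    {p p' : V} (hp : B p p ≠ 0) (hp' : B p' p' ≠ 0) (hne : K ∙ p ≠ K ∙ p') :
    ∃ l : Submodule K V, IsEllipticLine B l ∧ p' ∈ l ∧
      finrank K (K ∙ p ⊔ l : Submodule K V) = 3 ∧ (B.restrict (K ∙ p ⊔ l)).Nondegenerate := by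
  obtain ⟨ν, hν⟩ := FiniteField.exists_nonsquare hK
  set W := B.orthogonal (K ∙ p')
  have hWnd : (B.restrict W).Nondegenerate :=
    B.restrict_nondegenerate_orthogonal_spanSingleton hnd hB.isRefl hp'
  have hW : 3 ≤ finrank K W := by
    rw [finrank_orthogonal hnd, finrank_span_singleton (ne_zero_of_not_isOrtho_self p' hp')]
    omega
  have mem_W {v : V} (hv : B p' v = 0) : v ∈ W := fun n hn => by
    obtain ⟨a, rfl⟩ := mem_span_singleton.1 hn
    simp [hv]
  set z₀ := B p' p' • p - B p' p • p'
  have hz₀W : z₀ ∈ W := mem_W (by simp [z₀]; ring)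
  have hz₀ : z₀ ≠ 0 := by
    intro h0
    have hf : B p' p ≠ 0 := fun hf => hp (by simp_all [z₀])
    apply hne
    rw [← span_singleton_smul_eq (IsUnit.mk0 _ hp') p, sub_eq_zero.1 h0,
      span_singleton_smul_eq (IsUnit.mk0 _ hf)]
  obtain ⟨⟨z, hzW⟩, hzz, hdet⟩ := exists_apply_self_eq_gram_det_ne_zero hK (hB.restrict W) hWnd hW
    (x := ⟨z₀, hz₀W⟩) (by simpa using hz₀) (m := -(B p' p' * ν))
    (neg_ne_zero.2 (mul_ne_zero hp' fun h => hν (h ▸ IsSquare.zero)))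
  change B z z = _ at hzz
  change B z₀ z₀ * B z z - B z₀ z ^ 2 ≠ 0 at hdet
  have hp'z : B p' z = 0 := hzW p' (mem_span_singleton_self p')
  refine ⟨span K {p', z}, isEllipticLine_span_pair hB hp'z ?_, subset_span (by simp), ?_⟩
  · rw [hzz, show -(B p' p' * -(B p' p' * ν)) = B p' p' ^ 2 * ν by ring]
    exact not_isSquare_sq_mul hν hp'
  have hU := nondegenerate_restrict_span_singleton hB.isRefl hp'
  have hHW : span K {z₀, z} ≤ W :=
    span_le.2 (Set.insert_subset hz₀W (Set.singleton_subset_iff.2 hzW))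
  have : FiniteDimensional K (span K {z₀, z}) := FiniteDimensional.span_of_finite K (by simp)
  rw [span_singleton_sup_span_pair_eq hp', finrank_sup_eq_of_le_orthogonal hB.isRefl hU hHW,
    finrank_span_singleton (ne_zero_of_not_isOrtho_self p' hp'),
    finrank_span_pair_of_gram_det_ne_zero hB hdet]
  exact ⟨rfl, nondegenerate_restrict_sup hB.isRefl hU
    (nondegenerate_restrict_span_pair_of_gram_det_ne_zero hB hdet) hHW⟩

theorem exists_isEllipticLine_pair (hK : ringChar K ≠ 2) [FiniteDimensional K V]
    (hB : B.IsSymm) (hnd : B.Nondegenerate) (h4 : 4 ≤ finrank K V) {p p' : V} (hp : B p p ≠ 0)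
    (hp' : B p' p' ≠ 0) (hne : K ∙ p ≠ K ∙ p') :
    ∃ l : Submodule K V, IsEllipticLine B l ∧ p' ∈ l ∧
      finrank K (K ∙ p ⊔ l : Submodule K V) = 3 ∧ (B.restrict (K ∙ p ⊔ l)).Nondegenerate ∧
      ∃ l' : Submodule K V, IsEllipticLine B l' ∧ p ∈ l' ∧
        finrank K (l' ⊓ l : Submodule K V) = 1 ∧ (B.restrict (l' ⊓ l)).Nondegenerate := by
  obtain ⟨l, hl, hp'l, hT, hTnd⟩ :=
    exists_isEllipticLine_span_singleton_sup_nondegenerate hK hB hnd h4 hp hp' hne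
  exact ⟨l, hl, hp'l, hT, hTnd, exists_isEllipticLine_inf_nondegenerate hK hB hp hl hT hTnd⟩

end EllipticLine

section CollinearityGraph

variable {K V : Type*} [Field K] [AddCommGroup V] [Module K V] {B : LinearMap.BilinForm K V}

theorem exists_eq_span_singleton_of_finrank_eq_one {P : Submodule K V} (h1 : finrank K P = 1)
    (hnd : (B.restrict P).Nondegenerate) : ∃ p, P = K ∙ p ∧ B p p ≠ 0 := by
  obtain ⟨v, hv, hspan⟩ := finrank_eq_one_iff'.1 h1
  have hP : P = K ∙ (v : V) := by
    refine le_antisymm (fun w hw => ?_) ((span_singleton_le_iff_mem _ _).2 v.2)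
    obtain ⟨c, hc⟩ := hspan ⟨w, hw⟩
    exact mem_span_singleton.2 ⟨c, congrArg Subtype.val hc⟩
  refine ⟨v, hP, fun hvv => hv (hnd.1 v fun w => ?_)⟩
  obtain ⟨c, rfl⟩ := hspan w
  simp [hvv]

theorem ellipticCollinearityGraph_edist_le_one
    {P Q : {P : Submodule K V // finrank K P = 1 ∧ (B.restrict P).Nondegenerate}}
    {L : Submodule K V} (hL : IsEllipticLine B L) (hP : P.1 ≤ L) (hQ : Q.1 ≤ L) :
    (ellipticCollinearityGraph B).edist P Q ≤ 1 := by
  rw [SimpleGraph.edist_le_one_iff_adj_or_eq]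
  refine or_iff_not_imp_right.2 fun hPQ => ⟨hPQ, ?_⟩
  have : FiniteDimensional K L := Module.finite_of_finrank_pos (by rw [hL.1]; omega)
  have : FiniteDimensional K P.1 := Module.finite_of_finrank_pos (by rw [P.2.1]; omega)
  have hle : P.1 ⊔ Q.1 ≤ L := sup_le hP hQ
  have : FiniteDimensional K (P.1 ⊔ Q.1 : Submodule K V) := finiteDimensional_of_le hle
  have hQP : ¬Q.1 ≤ P.1 := fun h =>
    hPQ (Subtype.ext (eq_of_le_of_finrank_eq h (Q.2.1.trans P.2.1.symm)).symm)
  have hlt := finrank_lt_finrank_of_lt (left_lt_sup.2 hQP)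
  rw [P.2.1] at hlt
  rwa [eq_of_le_of_finrank_le hle (by rw [hL.1]; omega)]

end CollinearityGraph

theorem elliptic_collinearity_diameter_two_general
    {F V : Type*} [Field F] [Fintype F] [AddCommGroup V] [Module F V]
    (q : ℕ) (hq : Fintype.card F = q) (hodd : Odd q)
    (n : ℕ) (hn : 5 ≤ n + 1) (hdim : finrank F V = n + 1)
    (B : LinearMap.BilinForm F V) (hsymm : B.IsSymm) (hB : B.Nondegenerate) :
    (∀ p p' : V, B p p ≠ 0 → B p' p' ≠ 0 →
      Submodule.span F {p} ≠ Submodule.span F {p'} →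
      ∃ l : Submodule F V, IsEllipticLine B l ∧ p' ∈ l ∧
        finrank F (Submodule.span F {p} ⊔ l : Submodule F V) = 3 ∧
        (B.restrict (Submodule.span F {p} ⊔ l)).Nondegenerate ∧
        ∃ l' : Submodule F V, IsEllipticLine B l' ∧ p ∈ l' ∧
          finrank F (l' ⊓ l : Submodule F V) = 1 ∧
          (B.restrict (l' ⊓ l)).Nondegenerate) ∧
    (ellipticCollinearityGraph B).ediam ≤ 2 := by
  have hF : ringChar F ≠ 2 := fun h => by
    have := FiniteField.even_card_of_char_two h
    rw [hq] at this
    exact Nat.not_even_iff_odd.2 hodd (Nat.even_iff.2 this)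
  have : FiniteDimensional F V := Module.finite_of_finrank_pos (by omega)
  refine ⟨fun p p' hp hp' hne => exists_isEllipticLine_pair hF hsymm hB (by omega) hp hp' hne,
    SimpleGraph.ediam_le_iff.2 fun P Q => ?_⟩
  obtain rfl | hPQ := eq_or_ne P Q
  · simp
  obtain ⟨p, hP, hp⟩ := exists_eq_span_singleton_of_finrank_eq_one P.2.1 P.2.2
  obtain ⟨p', hQ, hp'⟩ := exists_eq_span_singleton_of_finrank_eq_one Q.2.1 Q.2.2
  obtain ⟨l, hl, hp'l, -, -, l', hl', hpl', hR, hRnd⟩ := exists_isEllipticLine_pair hF hsymm hB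
    (by omega) hp hp' (by rwa [← hP, ← hQ, Ne, ← Subtype.ext_iff])
  let R : {P : Submodule F V // finrank F P = 1 ∧ (B.restrict P).Nondegenerate} :=
    ⟨l' ⊓ l, hR, hRnd⟩
  have hPR := ellipticCollinearityGraph_edist_le_one (P := P) (Q := R) hl'
    (hP ▸ (span_singleton_le_iff_mem _ _).2 hpl') inf_le_left
  have hRQ := ellipticCollinearityGraph_edist_le_one (P := R) (Q := Q) hl inf_le_right
    (hQ ▸ (span_singleton_le_iff_mem _ _).2 hp'l)
  calc (ellipticCollinearityGraph B).edist P Q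
      ≤ (ellipticCollinearityGraph B).edist P R + (ellipticCollinearityGraph B).edist R Q :=
        SimpleGraph.edist_triangle
    _ ≤ 2 := by simpa [one_add_one_eq_two] using add_le_add hPR hRQ

/-- Over `F_q` (`q` odd), in an `(n+1)`-dimensional space of plus type with `n+1 ≥ 5`:
for any two distinct nondegenerate points `⟨p⟩`, `⟨p'⟩` there is an elliptic line `l`
through `⟨p'⟩` with `⟨p⟩ + l` a nondegenerate 3-space, and some elliptic line through
`⟨p⟩` meets `l` in a nondegenerate point.  In particular, the graph on nondegenerate
points with adjacency "lying on a common elliptic line" has diameter at most two. -/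
theorem elliptic_collinearity_diameter_two
    {F V : Type*} [Field F] [Fintype F] [AddCommGroup V] [Module F V]
    (q : ℕ) (hq : Fintype.card F = q) (hodd : Odd q)
    (n : ℕ) (hn : 5 ≤ n + 1) (hdim : finrank F V = n + 1)
    (B : LinearMap.BilinForm F V) (hsymm : B.IsSymm) (hB : B.Nondegenerate)
    (hplus : BIsPlusType B) :
    (∀ p p' : V, B p p ≠ 0 → B p' p' ≠ 0 →
      Submodule.span F {p} ≠ Submodule.span F {p'} →
      ∃ l : Submodule F V, IsEllipticLine B l ∧ p' ∈ l ∧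
        finrank F (Submodule.span F {p} ⊔ l : Submodule F V) = 3 ∧
        (B.restrict (Submodule.span F {p} ⊔ l)).Nondegenerate ∧
        ∃ l' : Submodule F V, IsEllipticLine B l' ∧ p ∈ l' ∧
          finrank F (l' ⊓ l : Submodule F V) = 1 ∧
          (B.restrict (l' ⊓ l)).Nondegenerate) ∧
    (ellipticCollinearityGraph B).ediam ≤ 2 :=
  elliptic_collinearity_diameter_two_general q hq hodd n hn hdim B hsymm hB
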